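/- In Karlin's occupancy scheme with probabilities $(p_k)_{k\ge1}$, for every $n\in\mathbb{N}$: $\mathbb{E}\,\#\{k\in\mathbb{N}: \bar Z_{n,k}\ge 1 \text{ and } n p_k<1\} = \sum_{k\ge1}\big(1-(1-p_k)^n\big)\mathbf{1}\{n p_k<1\} \le \int_1^\infty x^{-2}\big(\bar\rho(nx)-\bar\rho(n)\big)\,\mathrm{d}x$. -/

import Mathlib

/-!
Counting the occupied boxes with `n p_k < 1` box by box, the expectation is the sum of the
probabilities `1 - (1 - p_k)^n` that box `k` is hit. By Bernoulli's inequality each term is at most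
`n p_k`. On the other side, `ρ̄(nx) - ρ̄(n)` counts the boxes with `1/(nx) ≤ p_k < 1/n`, so by
Tonelli the integral splits into one integral `∫_{1/(n p_k)}^∞ x⁻² dx = n p_k` per box with
`n p_k < 1`.
-/

open MeasureTheory ProbabilityTheory Set
open scoped ENNReal

noncomputable section

/-- `rhoBar p t = #{k : p k ≥ 1/t}`, the number of boxes with probability at least `1/t`. -/
def rhoBar (p : ℕ → ℝ) (t : ℝ) : ℕ := Nat.card {k : ℕ | p k ≥ 1 / t}

/-- `Zbar X n k ω`: the number of the first `n` balls falling into box `k`. -/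
def Zbar {Ω : Type*} (X : ℕ → Ω → ℕ) (n : ℕ) (k : ℕ) (ω : Ω) : ℕ :=
  ((Finset.range n).filter (fun i => X i ω = k)).card

lemma one_sub_one_sub_pow_le_mul {p : ℝ} (hp : p ≤ 2) (n : ℕ) : 1 - (1 - p) ^ n ≤ n * p := by
  have h := one_add_mul_le_pow (a := -p) (by linarith) n
  rw [← sub_eq_add_neg] at h
  linarith

lemma Summable.finite_setOf_le {ι : Type*} {p : ι → ℝ} (hp : Summable p) {c : ℝ} (hc : 0 < c) :
    {k | c ≤ p k}.Finite := by
  have h := hp.tendsto_cofinite_zero.eventually_lt_const hc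
  rw [Filter.eventually_cofinite] at h
  exact h.subset fun k hk => not_lt.mpr hk

lemma lintegral_mul_encard_setOf_mem {Ω ι : Type*} [MeasurableSpace Ω] [Countable ι]
    (μ : Measure Ω) {g : Ω → ℝ≥0∞} (hg : AEMeasurable g μ) {E : ι → Set Ω}
    (hE : ∀ i, MeasurableSet (E i)) :
    ∫⁻ ω, g ω * {i | ω ∈ E i}.encard ∂μ = ∑' i, ∫⁻ ω in E i, g ω ∂μ := by
  have h_tsum : ∀ ω, g ω * {i | ω ∈ E i}.encard = ∑' i, (E i).indicator g ω := by
    intro ω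
    rw [← ENNReal.tsum_set_one, tsum_subtype {i | ω ∈ E i} fun _ => (1 : ℝ≥0∞),
      ← ENNReal.tsum_mul_left]
    congr 1 with i
    by_cases hi : ω ∈ E i <;> simp [hi]
  rw [lintegral_congr h_tsum, lintegral_tsum fun i => hg.indicator (hE i)]
  exact tsum_congr fun i => lintegral_indicator (hE i) _

lemma lintegral_Ici_zpow_neg_two {a : ℝ} (ha : 0 < a) :
    ∫⁻ x in Ici a, ENNReal.ofReal (x ^ (-2 : ℤ)) = ENNReal.ofReal a⁻¹ := by
  have h_rpow : EqOn (fun x : ℝ => x ^ (-2 : ℤ)) (fun x => x ^ (-2 : ℝ)) (Ioi a) := fun x _ => by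
    simp
  rw [← Measure.restrict_congr_set Ioi_ae_eq_Ici, ← ofReal_integral_eq_lintegral_ofReal]
  · rw [setIntegral_congr_fun measurableSet_Ioi h_rpow,
      integral_Ioi_rpow_of_lt (by norm_num) ha]
    norm_num [Real.rpow_neg_one]
  · exact (integrableOn_Ioi_rpow_of_lt (by norm_num) ha).congr_fun h_rpow.symm measurableSet_Ioi
  · filter_upwards [ae_restrict_mem measurableSet_Ioi] with x hx
    exact zpow_nonneg (ha.trans hx).le _

lemma setLIntegral_Ioi_one_zpow_neg_two {t q : ℝ} (ht : 0 < t) (hq : 0 < q) :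
    ∫⁻ x in {x | 1 / (t * x) ≤ q ∧ q < 1 / t} ∩ Ioi 1, ENNReal.ofReal (x ^ (-2 : ℤ))
      = ENNReal.ofReal (if t * q < 1 then t * q else 0) := by
  have hq_lt : q < 1 / t ↔ t * q < 1 := by rw [lt_div_iff₀ ht, mul_comm]
  split_ifs with h
  · have htq : 0 < t * q := by positivity
    have h_set : {x | 1 / (t * x) ≤ q ∧ q < 1 / t} ∩ Ioi 1 = Ici (t * q)⁻¹ := by
      ext x
      simp only [mem_inter_iff, mem_ofPred_eq, mem_Ioi, mem_Ici, hq_lt.mpr h, and_true,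
        inv_le_iff_one_le_mul₀' htq]
      constructor
      · rintro ⟨hx, hx₁⟩
        rw [div_le_iff₀ (by positivity)] at hx
        linarith
      · intro hx
        have hx₁ : 1 < x := by nlinarith
        refine ⟨?_, hx₁⟩
        rw [div_le_iff₀ (by positivity)]
        linarith
    rw [h_set, lintegral_Ici_zpow_neg_two (by positivity), inv_inv]
  · have h_set : {x | 1 / (t * x) ≤ q ∧ q < 1 / t} = ∅ :=
      eq_empty_of_forall_notMem fun x hx => h (hq_lt.mp hx.2)
    rw [h_set, empty_inter, Measure.restrict_empty, lintegral_zero_measure, ENNReal.ofReal_zero]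

lemma summable_ite_mul_lt_one {ι : Type*} {p : ι → ℝ} (hp : ∀ k, 0 ≤ p k) (hsum : Summable p)
    {t : ℝ} (ht : 0 ≤ t) : Summable fun k => if t * p k < 1 then t * p k else 0 :=
  (hsum.mul_left t).of_nonneg_of_le (fun k => by have := hp k; split_ifs <;> positivity)
    fun k => by have := hp k; split_ifs <;> [exact le_rfl; positivity]

lemma rhoBar_mono {p : ℕ → ℝ} (hp : Summable p) {t u : ℝ} (ht : 0 < t) (htu : t ≤ u) :
    rhoBar p t ≤ rhoBar p u :=
  Nat.card_mono (hp.finite_setOf_le (by have := ht.trans_le htu; positivity))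
    fun _ hk => (one_div_le_one_div_of_le ht htu).trans hk

lemma rhoBar_mul_sub_rhoBar {p : ℕ → ℝ} (hp : Summable p) {t x : ℝ} (ht : 0 < t) (hx : 1 ≤ x) :
    (rhoBar p (t * x) : ℝ) - rhoBar p t = {k | 1 / (t * x) ≤ p k ∧ p k < 1 / t}.ncard := by
  have h_sub : {k | p k ≥ 1 / t} ⊆ {k | p k ≥ 1 / (t * x)} := fun k hk =>
    (one_div_le_one_div_of_le ht (le_mul_of_one_le_right ht.le hx)).trans hk
  have h_diff : {k | 1 / (t * x) ≤ p k ∧ p k < 1 / t}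
      = {k | p k ≥ 1 / (t * x)} \ {k | p k ≥ 1 / t} := by
    ext k
    simp [not_le]
  rw [h_diff, rhoBar, rhoBar, Nat.card_coe_set_eq, Nat.card_coe_set_eq,
    ← ncard_sdiff_add_ncard_of_subset h_sub (hp.finite_setOf_le (by positivity))]
  push_cast
  ring

theorem integral_rhoBar_mul_sub_rhoBar {p : ℕ → ℝ} (hp : ∀ k, 0 < p k) (hsum : Summable p)
    {t : ℝ} (ht : 0 < t) :
    ∫ x in Ioi 1, x ^ (-2 : ℤ) * ((rhoBar p (t * x) : ℝ) - rhoBar p t)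
      = ∑' k, if t * p k < 1 then t * p k else 0 := by
  have hE : ∀ k, MeasurableSet {x : ℝ | 1 / (t * x) ≤ p k ∧ p k < 1 / t} := fun k =>
    (measurableSet_le (f := fun x : ℝ => 1 / (t * x)) (by fun_prop) measurable_const).inter
      (.const (p k < 1 / t))
  have h_count : ∀ x ∈ Ioi (1 : ℝ),
      ENNReal.ofReal (x ^ (-2 : ℤ) * ((rhoBar p (t * x) : ℝ) - rhoBar p t))
        = ENNReal.ofReal (x ^ (-2 : ℤ))
          * {k | x ∈ {x : ℝ | 1 / (t * x) ≤ p k ∧ p k < 1 / t}}.encard := by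
    intro x hx
    have hx₀ : 0 < x := zero_lt_one.trans hx
    have h_fin : {k | 1 / (t * x) ≤ p k ∧ p k < 1 / t}.Finite :=
      (hsum.finite_setOf_le (by positivity)).subset fun k hk => hk.1
    show _ = _ * (({k | 1 / (t * x) ≤ p k ∧ p k < 1 / t}.encard : ℕ∞) : ℝ≥0∞)
    rw [rhoBar_mul_sub_rhoBar hsum ht (le_of_lt hx), ENNReal.ofReal_mul (by positivity),
      ENNReal.ofReal_natCast, ← h_fin.cast_ncard_eq, ENat.toENNReal_coe]
  have h_nonneg : 0 ≤ᵐ[volume.restrict (Ioi 1)]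
      fun x : ℝ => x ^ (-2 : ℤ) * ((rhoBar p (t * x) : ℝ) - rhoBar p t) := by
    filter_upwards [ae_restrict_mem measurableSet_Ioi] with x hx
    have hx₀ : 0 < x := zero_lt_one.trans hx
    rw [Pi.zero_apply, rhoBar_mul_sub_rhoBar hsum ht (le_of_lt hx)]
    positivity
  have h_mono : MonotoneOn (fun x => (rhoBar p (t * x) : ℝ)) (Ioi 1) := fun x hx y _ hxy => by
    have hx₀ : 0 < x := zero_lt_one.trans hx
    show (rhoBar p (t * x) : ℝ) ≤ rhoBar p (t * y)
    exact_mod_cast rhoBar_mono hsum (by positivity) (by gcongr)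
  have h_meas : AEStronglyMeasurable
      (fun x : ℝ => x ^ (-2 : ℤ) * ((rhoBar p (t * x) : ℝ) - rhoBar p t))
      (volume.restrict (Ioi 1)) :=
    ((by fun_prop : Measurable fun x : ℝ => x ^ (-2 : ℤ)).aemeasurable.mul
      ((aemeasurable_restrict_of_monotoneOn measurableSet_Ioi h_mono).sub
        aemeasurable_const)).aestronglyMeasurable
  have h_term_nonneg : ∀ k, 0 ≤ if t * p k < 1 then t * p k else 0 := fun k => by
    have := hp k
    split_ifs <;> positivity
  have h_lintegral : ∫⁻ x in Ioi 1,
      ENNReal.ofReal (x ^ (-2 : ℤ) * ((rhoBar p (t * x) : ℝ) - rhoBar p t))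
        = ∑' k, ENNReal.ofReal (if t * p k < 1 then t * p k else 0) := by
    rw [setLIntegral_congr_fun measurableSet_Ioi h_count,
      lintegral_mul_encard_setOf_mem _ (by fun_prop) hE]
    exact tsum_congr fun k => by
      rw [Measure.restrict_restrict (hE k), setLIntegral_Ioi_one_zpow_neg_two ht (hp k)]
  rw [integral_eq_lintegral_of_nonneg_ae h_nonneg h_meas, h_lintegral,
    ← ENNReal.ofReal_tsum_of_nonneg h_term_nonneg
      (summable_ite_mul_lt_one (fun k => (hp k).le) hsum ht.le),
    ENNReal.toReal_ofReal (tsum_nonneg h_term_nonneg)]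

section Occupancy

variable {Ω : Type*} {X : ℕ → Ω → ℕ}

lemma finite_setOf_one_le_Zbar (n : ℕ) (ω : Ω) : {k | 1 ≤ Zbar X n k ω}.Finite := by
  refine ((Finset.range n).image fun i => X i ω).finite_toSet.subset fun k hk => ?_
  obtain ⟨i, hi⟩ := Finset.card_pos.mp hk
  exact Finset.mem_coe.mpr (Finset.mem_image.mpr ⟨i, Finset.mem_filter.mp hi⟩)

lemma setOf_Zbar_eq_zero (n k : ℕ) :
    {ω | Zbar X n k ω = 0} = ⋂ i ∈ Finset.range n, X i ⁻¹' {k}ᶜ := by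
  ext ω
  simp [Zbar, Finset.filter_eq_empty_iff]

variable [MeasurableSpace Ω]

lemma measurable_Zbar (hX : ∀ i, Measurable (X i)) (n k : ℕ) : Measurable (Zbar X n k) := by
  have h_sum : Zbar X n k = fun ω => ∑ i ∈ Finset.range n, if X i ω = k then 1 else 0 :=
    funext fun ω => Finset.card_filter _ _
  rw [h_sum]
  exact Finset.measurable_sum _ fun i _ =>
    Measurable.ite (hX i (measurableSet_singleton k)) measurable_const measurable_const

variable {P : Measure Ω}

lemma lintegral_card_occupied (hX : ∀ i, Measurable (X i)) (n : ℕ) (c : ℕ → Prop)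
    [DecidablePred c] :
    ∫⁻ ω, (Nat.card {k | 1 ≤ Zbar X n k ω ∧ c k} : ℝ≥0∞) ∂P
      = ∑' k, if c k then P {ω | 1 ≤ Zbar X n k ω} else 0 := by
  have hE : ∀ k, MeasurableSet {ω | 1 ≤ Zbar X n k ω ∧ c k} := fun k =>
    (measurable_Zbar hX n k .of_discrete).inter (.const _)
  calc _ = ∫⁻ ω, 1 * {k | ω ∈ {ω | 1 ≤ Zbar X n k ω ∧ c k}}.encard ∂P :=
        lintegral_congr fun ω => by
          rw [one_mul, Nat.card_coe_set_eq,
            ← ((finite_setOf_one_le_Zbar n ω).subset fun k hk => hk.1).cast_ncard_eq]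
          rfl
    _ = ∑' k, P {ω | 1 ≤ Zbar X n k ω ∧ c k} :=
        (lintegral_mul_encard_setOf_mem P aemeasurable_const hE).trans
          (tsum_congr fun k => setLIntegral_one _)
    _ = _ := tsum_congr fun k => by by_cases h : c k <;> simp [h]

variable [IsProbabilityMeasure P]

lemma measure_Zbar_eq_zero (hX : ∀ i, Measurable (X i)) (hindep : iIndepFun X P) (n k : ℕ) :
    P {ω | Zbar X n k ω = 0} = ∏ i ∈ Finset.range n, (1 - P {ω | X i ω = k}) := by
  rw [setOf_Zbar_eq_zero, hindep.measure_inter_preimage_eq_mul _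
    fun i _ => (measurableSet_singleton k).compl]
  exact Finset.prod_congr rfl fun i _ => prob_compl_eq_one_sub (hX i (measurableSet_singleton k))

lemma measure_one_le_Zbar (hX : ∀ i, Measurable (X i)) (hindep : iIndepFun X P) (n : ℕ)
    {k : ℕ} {q : ℝ} (hq₀ : 0 ≤ q) (hq₁ : q ≤ 1)
    (hlaw : ∀ i, P {ω | X i ω = k} = ENNReal.ofReal q) :
    P {ω | 1 ≤ Zbar X n k ω} = ENNReal.ofReal (1 - (1 - q) ^ n) := by
  have h_compl : {ω | 1 ≤ Zbar X n k ω} = {ω | Zbar X n k ω = 0}ᶜ := by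
    ext ω
    simp [Nat.one_le_iff_ne_zero]
  have h_meas : MeasurableSet {ω | Zbar X n k ω = 0} :=
    measurable_Zbar hX n k (measurableSet_singleton 0)
  rw [h_compl, prob_compl_eq_one_sub h_meas,
    measure_Zbar_eq_zero hX hindep, Finset.prod_congr rfl fun i _ => by rw [hlaw i],
    Finset.prod_const, Finset.card_range, ← ENNReal.ofReal_one, ← ENNReal.ofReal_sub _ hq₀,
    ← ENNReal.ofReal_pow (by linarith), ← ENNReal.ofReal_sub _ (by positivity)]

end Occupancy

theorem expected_count_of_underfilled_boxes
    (p : ℕ → ℝ) (hp : ∀ k, 0 < p k) (hsum : (∑' k, p k) = 1)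
    (Ω : Type) (_ : MeasurableSpace Ω) (P : Measure Ω) (hP : IsProbabilityMeasure P)
    (X : ℕ → Ω → ℕ) (hXmeas : ∀ i, Measurable (X i))
    (hindep : iIndepFun X P)
    (hlaw : ∀ i k, P {ω | X i ω = k} = ENNReal.ofReal (p k))
    (n : ℕ) :
    (∫⁻ ω, (Nat.card {k : ℕ | 1 ≤ Zbar X n k ω ∧ (n : ℝ) * p k < 1} : ℝ≥0∞) ∂P)
        = ENNReal.ofReal (∑' k, if (n : ℝ) * p k < 1 then 1 - (1 - p k) ^ n else 0)
      ∧ ENNReal.ofReal (∑' k, if (n : ℝ) * p k < 1 then 1 - (1 - p k) ^ n else 0)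
          ≤ ENNReal.ofReal (∫ x in Set.Ioi (1 : ℝ),
              x ^ (-2 : ℤ) * ((rhoBar p (n * x) : ℝ) - (rhoBar p n : ℝ))) := by
  have hsummable : Summable p := by
    by_contra h
    simp [tsum_eq_zero_of_not_summable h] at hsum
  have hp_le_one : ∀ k, p k ≤ 1 := fun k => hsum ▸ hsummable.le_tsum k fun j _ => (hp j).le
  have h_hit_nonneg : ∀ k, 0 ≤ if (n : ℝ) * p k < 1 then 1 - (1 - p k) ^ n else 0 := fun k => by
    have := pow_le_one₀ (n := n) (sub_nonneg.mpr (hp_le_one k)) (by linarith [hp k])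
    split_ifs <;> linarith
  have h_bernoulli : ∀ k, (if (n : ℝ) * p k < 1 then 1 - (1 - p k) ^ n else 0)
      ≤ if (n : ℝ) * p k < 1 then (n : ℝ) * p k else 0 := fun k => by
    split_ifs
    exacts [one_sub_one_sub_pow_le_mul (by linarith [hp_le_one k]) n, le_rfl]
  have h_bound_summable :=
    summable_ite_mul_lt_one (fun k => (hp k).le) hsummable (Nat.cast_nonneg n)
  have h_summable := h_bound_summable.of_nonneg_of_le h_hit_nonneg h_bernoulli
  refine ⟨?_, ?_⟩
  · rw [lintegral_card_occupied hXmeas, ENNReal.ofReal_tsum_of_nonneg h_hit_nonneg h_summable]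
    refine tsum_congr fun k => ?_
    split_ifs
    exacts [measure_one_le_Zbar hXmeas hindep n (hp k).le (hp_le_one k) fun i => hlaw i k,
      ENNReal.ofReal_zero.symm]
  · rcases n.eq_zero_or_pos with rfl | hn
    · simp
    rw [integral_rhoBar_mul_sub_rhoBar hp hsummable (by positivity)]
    exact ENNReal.ofReal_le_ofReal (h_summable.tsum_le_tsum h_bernoulli h_bound_summable)
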